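/- Let σ > 0 and D ≥ 1. Let A be an invertible D×D complex matrix with Frobenius norm 0 < ‖A‖_F < 1, let b ∈ ℂ^D, and set φ(z) = Az + b. If (g_m) is any sequence of measurable functions ℂ^D → ℂ that are square-integrable with respect to the Laplacian measure μ_L and whose L²(μ_L)-norms converge to 0, then each composition g_m ∘ φ is square-integrable with respect to μ_L and the L²(μ_L)-norms of g_m ∘ φ also converge to 0. -/

import Mathlib

open MeasureTheory Real Filter
open scoped BigOperators Topology

/-- The Euclidean norm `‖z‖₂` on `ℂ^D`. -/
noncomputable def euclNorm (D : ℕ) (z : Fin D → ℂ) : ℝ :=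
  Real.sqrt (∑ i, ‖z i‖ ^ 2)

/-- The Frobenius norm `‖A‖_F = (∑_{i,j} |a_{ij}|²)^{1/2}` of a complex matrix. -/
noncomputable def frobNorm (D : ℕ) (A : Matrix (Fin D) (Fin D) ℂ) : ℝ :=
  Real.sqrt (∑ i, ∑ j, ‖A i j‖ ^ 2)

/-- The Laplacian measure `dμ_L(z) = (2πσ²)^{-D} exp(−‖z‖₂/σ) dV(z)` on `ℂ^D ≅ ℝ^{2D}`. -/
noncomputable def lapMeasure (σ : ℝ) (D : ℕ) : Measure (Fin D → ℂ) :=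
  volume.withDensity fun z =>
    ENNReal.ofReal (((2 * π * σ ^ 2) ^ D)⁻¹ * Real.exp (-(euclNorm D z) / σ))

/-!
Since `‖A‖_F ≤ 1`, the triangle inequality gives `‖Az + b‖₂ ≤ ‖z‖₂ + ‖b‖₂`, so the Laplacian density
`ρ` satisfies `ρ z ≤ exp (‖b‖₂ / σ) · ρ (φ z)`. Combined with the change of variables for the
invertible affine map `φ`, this yields `φ_* μ_L ≤ C · μ_L` for a finite constant `C`, hence
`‖g ∘ φ‖_{L²(μ_L)} ≤ C^{1/2} ‖g‖_{L²(μ_L)}`: the Koopman operator is bounded, a fortiori closable.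
-/

open WithLp
open scoped ENNReal

theorem MeasureTheory.Measure.map_withDensity_le_smul {α : Type*} [MeasurableSpace α]
    {μ : Measure α} {φ : α → α} (hφ : Measurable φ) {c : ℝ≥0∞} (hμφ : μ.map φ = c • μ)
    {ρ : α → ℝ≥0∞} (hρ : Measurable ρ) {K : ℝ≥0∞} (hK : ∀ x, ρ x ≤ K * ρ (φ x)) :
    (μ.withDensity ρ).map φ ≤ (K * c) • μ.withDensity ρ := by
  refine Measure.le_iff.2 fun s hs => ?_
  rw [Measure.map_apply hφ hs, withDensity_apply _ (hφ hs), Measure.smul_apply,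
    withDensity_apply _ hs, smul_eq_mul]
  calc ∫⁻ x in φ ⁻¹' s, ρ x ∂μ ≤ ∫⁻ x in φ ⁻¹' s, K * ρ (φ x) ∂μ := lintegral_mono fun x => hK x
    _ = K * ∫⁻ y in s, ρ y ∂(μ.map φ) := by
        rw [lintegral_const_mul K (f := fun x => ρ (φ x)) (hρ.comp hφ), setLIntegral_map hs hρ hφ]
    _ = K * c * ∫⁻ y in s, ρ y ∂μ := by
        rw [hμφ, Measure.restrict_smul, lintegral_smul_measure, smul_eq_mul, mul_assoc]

theorem MeasureTheory.Measure.map_linearMap_add_const_addHaar {E : Type*} [NormedAddCommGroup E]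
    [NormedSpace ℝ E] [MeasurableSpace E] [BorelSpace E] [FiniteDimensional ℝ E] (μ : Measure E)
    [μ.IsAddHaarMeasure] {L : E →ₗ[ℝ] E} (hL : LinearMap.det L ≠ 0) (b : E) :
    μ.map (fun x => L x + b) = ENNReal.ofReal |(LinearMap.det L)⁻¹| • μ := by
  rw [← Function.comp_def (· + b) L, ← Measure.map_map (measurable_add_const b)
      L.continuous_of_finiteDimensional.measurable,
    Measure.map_linearMap_addHaar_eq_smul_addHaar μ hL, Measure.map_smul, map_add_right_eq_self]

theorem det_restrictScalars_mulVecLin_ne_zero {D : ℕ} {A : Matrix (Fin D) (Fin D) ℂ}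
    (hA : IsUnit A.det) : LinearMap.det (A.mulVecLin.restrictScalars ℝ) ≠ 0 := by
  have hAU : IsUnit A := (Matrix.isUnit_iff_isUnit_det A).2 hA
  have hL : IsUnit (A.mulVecLin.restrictScalars ℝ) := (Module.End.isUnit_iff _).2
    ⟨Matrix.mulVec_injective_iff_isUnit.2 hAU, Matrix.mulVec_surjective_iff_isUnit.2 hAU⟩
  exact ((LinearMap.isUnit_iff_isUnit_det _).1 hL).ne_zero

theorem MeasureTheory.eLpNorm_comp_le_of_map_le {α β E : Type*} [MeasurableSpace α]
    [MeasurableSpace β] [NormedAddCommGroup E] {μ : Measure α} {ν : Measure β} {φ : α → β}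
    (hφ : AEMeasurable φ μ) {c : ℝ≥0∞} (hc : μ.map φ ≤ c • ν) {f : β → E}
    (hf : AEStronglyMeasurable f ν) (p : ℝ≥0∞) :
    eLpNorm (f ∘ φ) p μ ≤ c ^ (1 / p).toReal * eLpNorm f p ν := by
  rw [← eLpNorm_map_measure ((hf.smul_measure c).mono_measure hc) hφ]
  exact (eLpNorm_mono_measure f hc).trans (eLpNorm_smul_measure_le c f p ν)

theorem MeasureTheory.MemLp.comp_of_map_le {α β E : Type*} [MeasurableSpace α]
    [MeasurableSpace β] [NormedAddCommGroup E] {μ : Measure α} {ν : Measure β} {φ : α → β}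
    (hφ : AEMeasurable φ μ) {c : ℝ≥0∞} (hc : μ.map φ ≤ c • ν) (hc_top : c ≠ ⊤) {f : β → E}
    {p : ℝ≥0∞} (hf : MemLp f p ν) : MemLp (f ∘ φ) p μ :=
  ⟨((hf.1.smul_measure c).mono_measure hc).comp_aemeasurable hφ,
    (eLpNorm_comp_le_of_map_le hφ hc hf.1 p).trans_lt
      (ENNReal.mul_lt_top (ENNReal.rpow_lt_top_of_nonneg ENNReal.toReal_nonneg hc_top) hf.2)⟩

theorem euclNorm_eq_norm (D : ℕ) (z : Fin D → ℂ) : euclNorm D z = ‖toLp 2 z‖ := by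
  simp [euclNorm, EuclideanSpace.norm_eq]

section Frobenius

attribute [local instance] Matrix.frobeniusNormedAddCommGroup

theorem frobNorm_eq_norm (D : ℕ) (A : Matrix (Fin D) (Fin D) ℂ) : frobNorm D A = ‖A‖ := by
  simp [frobNorm, Matrix.frobenius_norm_def, Real.sqrt_eq_rpow]

theorem euclNorm_mulVec_le (D : ℕ) (A : Matrix (Fin D) (Fin D) ℂ) (z : Fin D → ℂ) :
    euclNorm D (A.mulVec z) ≤ frobNorm D A * euclNorm D z := by
  rw [euclNorm_eq_norm, euclNorm_eq_norm, frobNorm_eq_norm,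
    ← Matrix.frobenius_norm_replicateCol (ι := Unit),
    ← Matrix.frobenius_norm_replicateCol (ι := Unit), Matrix.replicateCol_mulVec]
  exact Matrix.frobenius_norm_mul _ _

end Frobenius

theorem euclNorm_mulVec_add_le (D : ℕ) {A : Matrix (Fin D) (Fin D) ℂ} (hA : frobNorm D A ≤ 1)
    (z b : Fin D → ℂ) : euclNorm D (A.mulVec z + b) ≤ euclNorm D z + euclNorm D b := by
  have hAz : euclNorm D (A.mulVec z) ≤ euclNorm D z :=
    (euclNorm_mulVec_le D A z).trans (mul_le_of_le_one_left (Real.sqrt_nonneg _) hA)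
  calc euclNorm D (A.mulVec z + b) = ‖toLp 2 (A.mulVec z) + toLp 2 b‖ := by
        rw [euclNorm_eq_norm, WithLp.toLp_add]
    _ ≤ euclNorm D (A.mulVec z) + euclNorm D b := by
        rw [euclNorm_eq_norm, euclNorm_eq_norm]; exact norm_add_le _ _
    _ ≤ euclNorm D z + euclNorm D b := by gcongr

noncomputable def lapDensity (σ : ℝ) (D : ℕ) (z : Fin D → ℂ) : ℝ≥0∞ :=
  ENNReal.ofReal (((2 * π * σ ^ 2) ^ D)⁻¹ * Real.exp (-(euclNorm D z) / σ))

theorem lapMeasure_eq_withDensity (σ : ℝ) (D : ℕ) :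
    lapMeasure σ D = volume.withDensity (lapDensity σ D) := rfl

theorem measurable_lapDensity (σ : ℝ) (D : ℕ) : Measurable (lapDensity σ D) := by
  have hcont : Continuous (euclNorm D) := by
    simp_rw [funext (euclNorm_eq_norm D)]; fun_prop
  unfold lapDensity
  fun_prop

theorem lapDensity_le_mul_lapDensity_mulVec_add {σ : ℝ} (hσ : 0 ≤ σ) {D : ℕ}
    {A : Matrix (Fin D) (Fin D) ℂ} (hA : frobNorm D A ≤ 1) (b z : Fin D → ℂ) :
    lapDensity σ D z ≤
      ENNReal.ofReal (Real.exp (euclNorm D b / σ)) * lapDensity σ D (A.mulVec z + b) := by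
  rw [lapDensity, lapDensity, ← ENNReal.ofReal_mul (Real.exp_pos _).le]
  refine ENNReal.ofReal_le_ofReal ?_
  rw [mul_left_comm, ← Real.exp_add, ← add_div]
  have hnorm := euclNorm_mulVec_add_le D hA z b
  gcongr
  linarith

theorem lapMeasure_map_mulVec_add_le {σ : ℝ} (hσ : 0 ≤ σ) {D : ℕ}
    {A : Matrix (Fin D) (Fin D) ℂ} (hdet : IsUnit A.det) (hA : frobNorm D A ≤ 1)
    (b : Fin D → ℂ) :
    ∃ C : ℝ≥0∞, C ≠ ⊤ ∧ (lapMeasure σ D).map (fun z => A.mulVec z + b) ≤ C • lapMeasure σ D :=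
  ⟨_, by finiteness, lapMeasure_eq_withDensity σ D ▸ Measure.map_withDensity_le_smul
    (by fun_prop) (Measure.map_linearMap_add_const_addHaar volume
      (det_restrictScalars_mulVecLin_ne_zero hdet) b) (measurable_lapDensity σ D)
    (lapDensity_le_mul_lapDensity_mulVec_add hσ hA b)⟩

theorem koopman_affine_closable_general (σ : ℝ) (hσ : 0 < σ) (D : ℕ)
    (A : Matrix (Fin D) (Fin D) ℂ) (hA : IsUnit A.det)
    (hF1 : frobNorm D A < 1)
    (b : Fin D → ℂ) (g : ℕ → (Fin D → ℂ) → ℂ)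
    (hL2 : ∀ m, MemLp (g m) 2 (lapMeasure σ D))
    (hlim : Tendsto (fun m => eLpNorm (g m) 2 (lapMeasure σ D)) atTop (𝓝 0)) :
    (∀ m, MemLp (fun z => g m (A.mulVec z + b)) 2 (lapMeasure σ D))
    ∧ Tendsto (fun m => eLpNorm (fun z => g m (A.mulVec z + b)) 2 (lapMeasure σ D))
        atTop (𝓝 0) := by
  obtain ⟨C, hC, hmap⟩ := lapMeasure_map_mulVec_add_le hσ.le hA hF1.le b
  have hφ : AEMeasurable (fun z => A.mulVec z + b) (lapMeasure σ D) := by fun_prop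
  refine ⟨fun m => (hL2 m).comp_of_map_le hφ hmap hC, ?_⟩
  have hC' : C ^ (1 / (2 : ℝ≥0∞)).toReal ≠ ⊤ :=
    ENNReal.rpow_ne_top_of_nonneg ENNReal.toReal_nonneg hC
  have hbound : Tendsto (fun m => C ^ (1 / (2 : ℝ≥0∞)).toReal * eLpNorm (g m) 2 (lapMeasure σ D))
      atTop (𝓝 0) := by
    simpa using ENNReal.Tendsto.const_mul hlim (Or.inr hC')
  exact tendsto_of_tendsto_of_tendsto_of_le_of_le tendsto_const_nhds hbound (fun _ => zero_le)
    fun m => eLpNorm_comp_le_of_map_le hφ hmap (hL2 m).1 2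

/-- closability of the Koopman operator with affine symbol, Theorem 6.5
of the paper.  Let `φ(z) = Az + b` with `A` invertible and `0 < ‖A‖_F < 1`.  If `(g_m)`
is a sequence of measurable functions that are square-integrable for the Laplacian
measure `μ_L` whose `L²(μ_L)`-norms tend to `0`, then every `g_m ∘ φ` is
square-integrable for `μ_L` and the `L²(μ_L)`-norms of `g_m ∘ φ` tend to `0`. -/
theorem koopman_affine_closable (σ : ℝ) (hσ : 0 < σ) (D : ℕ) (hD : 1 ≤ D)
    (A : Matrix (Fin D) (Fin D) ℂ) (hA : IsUnit A.det)
    (hF0 : 0 < frobNorm D A) (hF1 : frobNorm D A < 1)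
    (b : Fin D → ℂ) (g : ℕ → (Fin D → ℂ) → ℂ)
    (hmeas : ∀ m, Measurable (g m))
    (hL2 : ∀ m, MemLp (g m) 2 (lapMeasure σ D))
    (hlim : Tendsto (fun m => eLpNorm (g m) 2 (lapMeasure σ D)) atTop (𝓝 0)) :
    (∀ m, MemLp (fun z => g m (A.mulVec z + b)) 2 (lapMeasure σ D))
    ∧ Tendsto (fun m => eLpNorm (fun z => g m (A.mulVec z + b)) 2 (lapMeasure σ D))
        atTop (𝓝 0) :=
  koopman_affine_closable_general σ hσ D A hA hF1 b g hL2 hlim
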